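/- For every I ∈ S̄, the group of Γ-fixed points of the finite parabolic subgroup W_I is exactly {1, w_I}. -/

import Mathlib

open CoxeterSystem

/-- The subgroup of fixed points of a group `Γ` of automorphisms of `W`. -/
def fixedSubgroup {W : Type*} [Group W] (Γ : Subgroup (MulAut W)) : Subgroup W where
  carrier := {w | ∀ γ ∈ Γ, γ w = w}
  one_mem' := fun γ _ => map_one γ
  mul_mem' := fun {a b} ha hb γ hγ => by rw [map_mul, ha γ hγ, hb γ hγ]
  inv_mem' := fun {a} ha γ hγ => by rw [map_inv, ha γ hγ]

/-- `I` is a `Γ`-orbit on the set `S` of simple reflections of `(W, S)` such that the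
standard parabolic subgroup `W_I` generated by `I` is finite. -/
def IsFinParabolicOrbit {B W : Type*} [Group W] {M : CoxeterMatrix B}
    (cs : CoxeterSystem M W) (Γ : Subgroup (MulAut W)) (I : Set W) : Prop :=
  (∃ s ∈ Set.range cs.simple, I = {t | ∃ γ ∈ Γ, γ s = t}) ∧
    Finite ↥(Subgroup.closure I)

/-- `w` is the longest element of the standard parabolic subgroup `W_I` generated by `I`. -/
def IsLongestIn {B W : Type*} [Group W] {M : CoxeterMatrix B}
    (cs : CoxeterSystem M W) (I : Set W) (w : W) : Prop :=
  w ∈ Subgroup.closure I ∧ ∀ u ∈ Subgroup.closure I, cs.length u ≤ cs.length w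

/-!
The left component of Tits' sign representation `s i ↦ (δ_{s i}, s i)` of `W` in
`(W → ℤˣ) ⋊ W` records, for every word, the parity of the number of occurrences of `t` in its
left inversion sequence; so this parity depends only on the element, which gives the exchange
condition, `ℓ w = #{left inversions of w}`, and the cocycle rule
`t ∈ Inv(u v) ↔ (t ∈ Inv u ↔ u⁻¹ t u ∉ Inv v)`.

For a longest element `L` of `W_I`, `Inv L` is the set of all reflections of `W_I`, so the
cocycle rule gives `Inv (u L) = Inv L \ Inv u` and `ℓ (u L) + ℓ u = ℓ L` for `u ∈ W_I`. Hence `L`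
is the unique longest element (so `Γ`-fixed, `Γ` preserving `ℓ` and `W_I`), and each `s ∈ I` is a
left descent of exactly one of `u`, `u L`. A `Γ`-fixed `w ≠ 1` in `W_I` has a left descent in
`I`, hence, `Γ` being transitive on `I`, all of `I` as left descents. If also `w ≠ L`, then
`w L` is another such element, sharing these descents with `w`: a contradiction.
-/

theorem apply_mem_closure_orbit {W : Type*} [Group W] {Γ : Subgroup (MulAut W)} {γ : MulAut W}
    (hγ : γ ∈ Γ) {x w : W} (hw : w ∈ Subgroup.closure {t | ∃ γ ∈ Γ, γ x = t}) :
    γ w ∈ Subgroup.closure {t | ∃ γ ∈ Γ, γ x = t} := by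
  have hmap : (Subgroup.closure {t | ∃ γ ∈ Γ, γ x = t}).map γ.toMonoidHom ≤
      Subgroup.closure {t | ∃ γ ∈ Γ, γ x = t} := by
    rw [MonoidHom.map_closure]
    refine Subgroup.closure_mono ?_
    rintro _ ⟨_, ⟨δ, hδ, rfl⟩, rfl⟩
    exact ⟨γ * δ, mul_mem hγ hδ, rfl⟩
  exact hmap ⟨w, hw, rfl⟩

namespace CoxeterSystem

variable {B W : Type*} [Group W] {M : CoxeterMatrix B} (cs : CoxeterSystem M W)

local prefix:100 "s" => cs.simple
local prefix:100 "π" => cs.wordProd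
local prefix:100 "ℓ" => cs.length
local prefix:100 "lis " => cs.leftInvSeq

def conjArrowAction : W →* MulAut (W → ℤˣ) :=
  mulAutArrow.comp ConjAct.toConjAct.toMonoidHom

theorem conjArrowAction_apply (w : W) (f : W → ℤˣ) (t : W) :
    conjArrowAction w f t = f (w⁻¹ * t * w) := by
  change f ((ConjAct.toConjAct w)⁻¹ • t) = _
  simp [ConjAct.smul_def]

section Sign

variable [DecidableEq W]

def signGen (i : B) : (W → ℤˣ) ⋊[conjArrowAction] W := ⟨Pi.mulSingle (s i) (-1), s i⟩

theorem prod_map_signGen (ω : List B) :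
    (ω.map cs.signGen).prod = ⟨fun t ↦ (-1) ^ (lis ω).count t, π ω⟩ := by
  induction ω with
  | nil => rfl
  | cons i ω ih =>
    rw [List.map_cons, List.prod_cons, ih, SemidirectProduct.mul_def]
    congr 1
    · funext t
      have hcount :
          ((lis ω).map (MulAut.conj (s i))).count t = (lis ω).count (s i * t * s i) := by
        nth_rw 1 [show t = MulAut.conj (s i) (s i * t * s i) by simp [mul_assoc]]
        exact List.count_map_of_injective _ _ (MulAut.conj (s i)).injective _
      change (Pi.mulSingle (s i) (-1) : W → ℤˣ) t * conjArrowAction (s i) _ t = _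
      rw [conjArrowAction_apply, inv_simple, leftInvSeq, List.count_cons, hcount,
        Pi.mulSingle_apply]
      rcases eq_or_ne t (s i) with rfl | h
      · simp [pow_succ]
      · simp [h, h.symm]

theorem signGen_mul_signGen_pow (i j : B) (p : ℕ) :
    (cs.signGen i * cs.signGen j) ^ p = ((alternatingWord i j (2 * p)).map cs.signGen).prod := by
  induction p with
  | zero => rfl
  | succ p ih =>
    rw [pow_succ', ih, Nat.mul_succ, alternatingWord_succ', alternatingWord_succ']
    simp [mul_assoc]

-- The `k`-th entry of this inversion sequence is `s i * (s j * s i) ^ k`, of period `M i j`.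
theorem even_count_leftInvSeq_braidWord (i j : B) (t : W) :
    Even ((lis (alternatingWord i j (2 * M i j))).count t) := by
  have hlis : lis (alternatingWord i j (2 * M i j)) =
      (List.range (2 * M i j)).map fun k ↦ s i * (s j * s i) ^ k := by
    refine List.ext_getElem (by simp) fun k hk _ ↦ ?_
    rw [getElem_leftInvSeq_alternatingWord cs i j _ k (by simpa using hk),
      prod_alternatingWord_eq_mul_pow]
    simp [Nat.mul_add_div]
  have hperiod : ∀ k, s i * (s j * s i) ^ (M i j + k) = s i * (s j * s i) ^ k := by
    simp [pow_add]
  rw [hlis, two_mul, List.range_add, List.map_append, List.map_map, List.count_append]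
  simp only [Function.comp_def, hperiod]
  exact ⟨_, rfl⟩

theorem isLiftable_signGen : M.IsLiftable cs.signGen := by
  intro i j
  rw [signGen_mul_signGen_pow, prod_map_signGen]
  ext t
  · simp [(even_count_leftInvSeq_braidWord cs i j t).neg_one_pow]
  · simp [prod_alternatingWord_eq_mul_pow]

def signRep : W →* (W → ℤˣ) ⋊[conjArrowAction] W :=
  cs.lift ⟨cs.signGen, cs.isLiftable_signGen⟩

theorem signRep_wordProd (ω : List B) :
    cs.signRep (π ω) = ⟨fun t ↦ (-1) ^ (lis ω).count t, π ω⟩ := by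
  rw [← prod_map_signGen, wordProd, map_list_prod, List.map_map]
  congr 1
  exact List.map_congr_left fun i _ ↦ cs.lift_apply_simple cs.isLiftable_signGen i

theorem signRep_right (w : W) : (cs.signRep w).right = w := by
  obtain ⟨ω, rfl⟩ := cs.wordProd_surjective w
  rw [signRep_wordProd]

def inversionSign (w t : W) : ℤˣ := (cs.signRep w).left t

theorem inversionSign_wordProd (ω : List B) (t : W) :
    cs.inversionSign (π ω) t = (-1) ^ (lis ω).count t := by
  rw [inversionSign, signRep_wordProd]

theorem inversionSign_mul (u v t : W) :
    cs.inversionSign (u * v) t = cs.inversionSign u t * cs.inversionSign v (u⁻¹ * t * u) := by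
  rw [inversionSign, map_mul, SemidirectProduct.mul_left, signRep_right, Pi.mul_apply,
    conjArrowAction_apply]
  rfl

theorem inversionSign_one (t : W) : cs.inversionSign 1 t = 1 := by
  rw [inversionSign, map_one]
  rfl

theorem inversionSign_self {t : W} (ht : cs.IsReflection t) : cs.inversionSign t t = -1 := by
  obtain ⟨v, i, rfl⟩ := ht
  have hsimple : cs.inversionSign (s i) (s i) = -1 := by
    simpa using cs.inversionSign_wordProd [i] (s i)
  have hcancel := cs.inversionSign_mul v v⁻¹ (v * s i * v⁻¹)
  rw [mul_inv_cancel, inversionSign_one] at hcancel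
  rw [mul_assoc, inversionSign_mul, inversionSign_mul]
  simp only [inv_simple, mul_assoc, inv_mul_cancel_left, inv_mul_cancel, mul_one,
    simple_mul_simple_cancel_left] at hcancel ⊢
  rw [hsimple, mul_left_comm, ← hcancel, mul_one]

theorem inversionSign_wordProd_eq_neg_one_iff {ω : List B} (hω : cs.IsReduced ω) (t : W) :
    cs.inversionSign (π ω) t = -1 ↔ t ∈ lis ω := by
  rw [inversionSign_wordProd, ← List.count_pos_iff]
  rcases Nat.le_one_iff_eq_zero_or_eq_one.mp (List.nodup_iff_count_le_one.mp hω.nodup_leftInvSeq t)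
    with h | h <;> simp [h]

theorem isLeftInversion_of_inversionSign_eq_neg_one {w t : W} (h : cs.inversionSign w t = -1) :
    cs.IsLeftInversion w t := by
  obtain ⟨ω, hω, rfl⟩ := cs.exists_isReduced w
  exact cs.isLeftInversion_of_mem_leftInvSeq hω
    ((cs.inversionSign_wordProd_eq_neg_one_iff hω t).mp h)

theorem isLeftInversion_iff_inversionSign_eq_neg_one {t : W} (ht : cs.IsReflection t) (w : W) :
    cs.IsLeftInversion w t ↔ cs.inversionSign w t = -1 := by
  refine ⟨fun ⟨_, hlt⟩ ↦ ?_, cs.isLeftInversion_of_inversionSign_eq_neg_one⟩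
  have hdecomp : cs.inversionSign w t = -cs.inversionSign (t * w) t := by
    have := cs.inversionSign_mul t (t * w) t
    rw [← mul_assoc, ht.mul_self, one_mul, inversionSign_self cs ht, ht.inv, ht.mul_self,
      one_mul] at this
    rw [this, neg_one_mul]
  rcases Int.units_eq_one_or (cs.inversionSign (t * w) t) with h | h
  · rw [hdecomp, h]
  · have := (cs.isLeftInversion_of_inversionSign_eq_neg_one h).2
    rw [← mul_assoc, ht.mul_self, one_mul] at this
    omega

end Sign

theorem isLeftInversion_mul_iff {t : W} (ht : cs.IsReflection t) (u v : W) :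
    cs.IsLeftInversion (u * v) t ↔
      (cs.IsLeftInversion u t ↔ ¬cs.IsLeftInversion v (u⁻¹ * t * u)) := by
  classical
  have ht' : cs.IsReflection (u⁻¹ * t * u) := by simpa using ht.conj u⁻¹
  simp only [cs.isLeftInversion_iff_inversionSign_eq_neg_one ht,
    cs.isLeftInversion_iff_inversionSign_eq_neg_one ht', inversionSign_mul]
  rcases Int.units_eq_one_or (cs.inversionSign u t) with h | h <;>
  rcases Int.units_eq_one_or (cs.inversionSign v (u⁻¹ * t * u)) with h' | h' <;>
  simp [h, h']

theorem setOf_isLeftInversion_wordProd {ω : List B} (hω : cs.IsReduced ω) :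
    {t | cs.IsLeftInversion (π ω) t} = {t | t ∈ lis ω} := by
  classical
  ext t
  refine ⟨fun ht ↦ ?_, cs.isLeftInversion_of_mem_leftInvSeq hω⟩
  exact (cs.inversionSign_wordProd_eq_neg_one_iff hω t).mp
    ((cs.isLeftInversion_iff_inversionSign_eq_neg_one ht.1 _).mp ht)

theorem finite_setOf_isLeftInversion (w : W) : {t | cs.IsLeftInversion w t}.Finite := by
  obtain ⟨ω, hω, rfl⟩ := cs.exists_isReduced w
  rw [cs.setOf_isLeftInversion_wordProd hω]
  exact (lis ω).finite_toSet

theorem ncard_setOf_isLeftInversion (w : W) : {t | cs.IsLeftInversion w t}.ncard = ℓ w := by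
  classical
  obtain ⟨ω, hω, rfl⟩ := cs.exists_isReduced w
  rw [cs.setOf_isLeftInversion_wordProd hω, ← List.coe_toFinset, Set.ncard_coe_finset,
    List.toFinset_card_of_nodup hω.nodup_leftInvSeq, length_leftInvSeq, hω.eq]

section Parabolic

variable {I : Set W}

theorem wordProd_mem_closure {ω : List B} (hω : ∀ i ∈ ω, s i ∈ I) :
    π ω ∈ Subgroup.closure I :=
  Subgroup.list_prod_mem _ (by simpa using fun i hi ↦ Subgroup.subset_closure (hω i hi))

theorem mem_closure_of_mem_leftInvSeq {ω : List B} (hω : ∀ i ∈ ω, s i ∈ I) {t : W}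
    (ht : t ∈ lis ω) : t ∈ Subgroup.closure I := by
  obtain ⟨j, hj, rfl⟩ := List.getElem_of_mem ht
  have hj' : j < ω.length := by simpa using hj
  have htake : π (ω.take j) ∈ Subgroup.closure I :=
    cs.wordProd_mem_closure fun i hi ↦ hω i (List.mem_of_mem_take hi)
  rw [getElem_leftInvSeq cs ω j hj']
  exact mul_mem (mul_mem htake (Subgroup.subset_closure (hω _ (List.getElem_mem hj'))))
    (inv_mem htake)

theorem exists_word_of_mem_closure (hI : I ⊆ Set.range cs.simple) {w : W}
    (hw : w ∈ Subgroup.closure I) : ∃ ω : List B, (∀ i ∈ ω, s i ∈ I) ∧ π ω = w := by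
  induction hw using Subgroup.closure_induction with
  | mem x hx =>
    obtain ⟨i, rfl⟩ := hI hx
    exact ⟨[i], by simpa using hx, wordProd_singleton cs i⟩
  | one => exact ⟨[], by simp, wordProd_nil cs⟩
  | mul x y _ _ hx hy =>
    obtain ⟨ω, hωI, rfl⟩ := hx
    obtain ⟨ω', hω'I, rfl⟩ := hy
    exact ⟨ω ++ ω', by simp_all [or_imp], wordProd_append cs ω ω'⟩
  | inv x _ hx =>
    obtain ⟨ω, hωI, rfl⟩ := hx
    exact ⟨ω.reverse, by simpa using hωI, wordProd_reverse cs ω⟩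

theorem exists_simple_mul_eq_wordProd_eraseIdx {ω : List B} (hω : cs.IsReduced ω) {i : B}
    (hi : cs.IsLeftDescent (π ω) i) : ∃ j < ω.length, s i * π ω = π (ω.eraseIdx j) := by
  have hmem : s i ∈ lis ω := (cs.setOf_isLeftInversion_wordProd hω).subset
    ((cs.isLeftInversion_simple_iff_isLeftDescent _ i).mpr hi)
  obtain ⟨j, hj, hget⟩ := List.getElem_of_mem hmem
  refine ⟨j, by simpa using hj, ?_⟩
  rw [← hget, ← List.getD_eq_getElem _ 1 hj, getD_leftInvSeq_mul_wordProd]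

theorem exists_reduced_word_of_mem_closure (hI : I ⊆ Set.range cs.simple) {w : W}
    (hw : w ∈ Subgroup.closure I) :
    ∃ ω : List B, (∀ i ∈ ω, s i ∈ I) ∧ cs.IsReduced ω ∧ π ω = w := by
  obtain ⟨ω, hωI, rfl⟩ := cs.exists_word_of_mem_closure hI hw
  clear hw
  induction ω with
  | nil => exact ⟨[], by simp, by simp [IsReduced], rfl⟩
  | cons i ω ih =>
    obtain ⟨σ, hσI, hσ, hσω⟩ := ih fun j hj ↦ hωI j (List.mem_cons_of_mem i hj)
    rw [wordProd_cons, ← hσω]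
    rcases cs.length_simple_mul (π σ) i with hup | hdown
    · refine ⟨i :: σ, ?_, ?_, wordProd_cons cs i σ⟩
      · simpa [hωI i List.mem_cons_self] using hσI
      · rw [IsReduced, wordProd_cons, hup, hσ.eq, List.length_cons]
    · obtain ⟨j, hj, hexch⟩ := cs.exists_simple_mul_eq_wordProd_eraseIdx hσ
        (show ℓ (s i * π σ) < ℓ (π σ) by omega)
      refine ⟨σ.eraseIdx j, fun k hk ↦ hσI k ((σ.eraseIdx_sublist j).mem hk), ?_,
        hexch.symm⟩
      have hlen := List.length_eraseIdx_add_one hj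
      have hσlen := hσ.eq
      rw [IsReduced, ← hexch]
      omega

theorem mem_closure_of_isLeftInversion (hI : I ⊆ Set.range cs.simple) {w t : W}
    (hw : w ∈ Subgroup.closure I) (ht : cs.IsLeftInversion w t) : t ∈ Subgroup.closure I := by
  obtain ⟨ω, hωI, hω, rfl⟩ := cs.exists_reduced_word_of_mem_closure hI hw
  exact cs.mem_closure_of_mem_leftInvSeq hωI ((cs.setOf_isLeftInversion_wordProd hω).subset ht)

theorem exists_isLeftDescent_of_mem_closure (hI : I ⊆ Set.range cs.simple) {w : W}
    (hw : w ∈ Subgroup.closure I) (hne : w ≠ 1) :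
    ∃ i, s i ∈ I ∧ cs.IsLeftDescent w i := by
  obtain ⟨_ | ⟨i, ω⟩, hωI, hω, rfl⟩ := cs.exists_reduced_word_of_mem_closure hI hw
  · exact absurd (wordProd_nil cs) hne
  · refine ⟨i, hωI i List.mem_cons_self, (cs.isLeftInversion_simple_iff_isLeftDescent _ i).mp
      (cs.isLeftInversion_of_mem_leftInvSeq hω ?_)⟩
    simp [leftInvSeq]

end Parabolic

theorem length_map_le (φ : W →* W) (hφ : ∀ i, φ (s i) ∈ Set.range cs.simple) (w : W) :
    ℓ (φ w) ≤ ℓ w := by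
  choose f hf using hφ
  obtain ⟨ω, hω, rfl⟩ := cs.exists_isReduced w
  have hmap : φ (π ω) = π (ω.map f) := by
    simp only [wordProd, map_list_prod, List.map_map, Function.comp_def, hf]
  calc ℓ (φ (π ω)) = ℓ (π (ω.map f)) := by rw [hmap]
    _ ≤ (ω.map f).length := cs.length_wordProd_le _
    _ = ℓ (π ω) := by rw [List.length_map, hω.eq]

theorem length_map_eq (φ : W ≃* W) (hφ : φ '' Set.range cs.simple = Set.range cs.simple)
    (w : W) : ℓ (φ w) = ℓ w := by
  refine le_antisymm (cs.length_map_le φ.toMonoidHom (fun i ↦ ?_) w) ?_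
  · exact hφ ▸ Set.mem_image_of_mem φ ⟨i, rfl⟩
  · have hsymm : ∀ i, φ.symm (s i) ∈ Set.range cs.simple := fun i ↦ by
      obtain ⟨x, hx, hxi⟩ := hφ.symm ▸ Set.mem_range_self (f := cs.simple) i
      rwa [← hxi, MulEquiv.symm_apply_apply]
    simpa using cs.length_map_le φ.symm.toMonoidHom hsymm (φ w)

section Orbit

variable {Γ : Subgroup (MulAut W)}

theorem setOf_apply_simple_subset_range
    (hΓ : ∀ γ ∈ Γ, ⇑γ '' Set.range cs.simple = Set.range cs.simple) (i₀ : B) :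
    {t | ∃ γ ∈ Γ, γ (s i₀) = t} ⊆ Set.range cs.simple := by
  rintro _ ⟨γ, hγ, rfl⟩
  exact hΓ γ hγ ▸ Set.mem_image_of_mem γ ⟨i₀, rfl⟩

theorem isLeftDescent_of_mem_closure_orbit
    (hΓ : ∀ γ ∈ Γ, ⇑γ '' Set.range cs.simple = Set.range cs.simple) {i₀ : B} {w : W}
    (hw : w ∈ Subgroup.closure {t | ∃ γ ∈ Γ, γ (s i₀) = t})
    (hfix : ∀ γ ∈ Γ, γ w = w) (hne : w ≠ 1) : cs.IsLeftDescent w i₀ := by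
  obtain ⟨i, ⟨γ, hγ, hγi⟩, hdesc⟩ :=
    cs.exists_isLeftDescent_of_mem_closure (cs.setOf_apply_simple_subset_range hΓ i₀) hw hne
  have hmap : γ (s i₀ * w) = s i * w := by rw [map_mul, hγi, hfix γ hγ]
  rw [IsLeftDescent, ← cs.length_map_eq γ (hΓ γ hγ) (s i₀ * w), hmap]
  exact hdesc

end Orbit

end CoxeterSystem

namespace IsLongestIn

variable {B W : Type*} [Group W] {M : CoxeterMatrix B} {cs : CoxeterSystem M W} {I : Set W}
  {L : W}

theorem isLeftInversion_iff (hL : IsLongestIn cs I L) (hI : I ⊆ Set.range cs.simple) {t : W} :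
    cs.IsLeftInversion L t ↔ cs.IsReflection t ∧ t ∈ Subgroup.closure I :=
  ⟨fun ht ↦ ⟨ht.1, cs.mem_closure_of_isLeftInversion hI hL.1 ht⟩, fun ⟨ht, htI⟩ ↦
    ⟨ht, lt_of_le_of_ne (hL.2 _ (mul_mem htI hL.1)) (ht.length_mul_right_ne L)⟩⟩

theorem setOf_isLeftInversion_subset (hL : IsLongestIn cs I L) (hI : I ⊆ Set.range cs.simple)
    {u : W} (hu : u ∈ Subgroup.closure I) :
    {t | cs.IsLeftInversion u t} ⊆ {t | cs.IsLeftInversion L t} := fun _ ht ↦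
  (hL.isLeftInversion_iff hI).mpr ⟨ht.1, cs.mem_closure_of_isLeftInversion hI hu ht⟩

theorem isLeftInversion_mul_iff (hL : IsLongestIn cs I L) (hI : I ⊆ Set.range cs.simple)
    {u t : W} (hu : u ∈ Subgroup.closure I) :
    cs.IsLeftInversion (u * L) t ↔ cs.IsLeftInversion L t ∧ ¬cs.IsLeftInversion u t := by
  by_cases ht : cs.IsReflection t
  · have hmem : u⁻¹ * t * u ∈ Subgroup.closure I ↔ t ∈ Subgroup.closure I :=
      ⟨fun h ↦ by simpa [mul_assoc] using mul_mem (mul_mem hu h) (inv_mem hu),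
        fun h ↦ mul_mem (mul_mem (inv_mem hu) h) hu⟩
    have hrefl : cs.IsReflection (u⁻¹ * t * u) ↔ cs.IsReflection t := by
      simpa using cs.isReflection_conj_iff u⁻¹ t
    have hconj : cs.IsLeftInversion L (u⁻¹ * t * u) ↔ cs.IsLeftInversion L t := by
      rw [hL.isLeftInversion_iff hI, hL.isLeftInversion_iff hI, hmem, hrefl]
    have hsub : cs.IsLeftInversion u t → cs.IsLeftInversion L t :=
      fun h ↦ hL.setOf_isLeftInversion_subset hI hu h
    rw [cs.isLeftInversion_mul_iff ht, hconj]
    tauto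
  · exact iff_of_false (fun h ↦ ht h.1) (fun h ↦ ht h.1.1)

theorem length_mul_add_length (hL : IsLongestIn cs I L) (hI : I ⊆ Set.range cs.simple) {u : W}
    (hu : u ∈ Subgroup.closure I) : cs.length (u * L) + cs.length u = cs.length L := by
  have hset : {t | cs.IsLeftInversion (u * L) t} =
      {t | cs.IsLeftInversion L t} \ {t | cs.IsLeftInversion u t} := by
    ext t
    exact hL.isLeftInversion_mul_iff hI hu
  rw [← cs.ncard_setOf_isLeftInversion, ← cs.ncard_setOf_isLeftInversion,
    ← cs.ncard_setOf_isLeftInversion, hset]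
  exact Set.ncard_sdiff_add_ncard_of_subset (hL.setOf_isLeftInversion_subset hI hu)
    (cs.finite_setOf_isLeftInversion L)

theorem mul_self (hL : IsLongestIn cs I L) (hI : I ⊆ Set.range cs.simple) : L * L = 1 :=
  cs.length_eq_zero_iff.mp (by have := hL.length_mul_add_length hI hL.1; omega)

theorem eq_of_length_le (hL : IsLongestIn cs I L) (hI : I ⊆ Set.range cs.simple) {u : W}
    (hu : u ∈ Subgroup.closure I) (hle : cs.length L ≤ cs.length u) : u = L := by
  have hlen := hL.length_mul_add_length hI hu
  have huL : u * L = 1 := cs.length_eq_zero_iff.mp (by omega)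
  rw [eq_inv_of_mul_eq_one_left huL, inv_eq_of_mul_eq_one_right (hL.mul_self hI)]

theorem isLeftDescent_mul_iff (hL : IsLongestIn cs I L) (hI : I ⊆ Set.range cs.simple) {u : W}
    (hu : u ∈ Subgroup.closure I) {i : B} (hi : cs.simple i ∈ I) :
    cs.IsLeftDescent (u * L) i ↔ ¬cs.IsLeftDescent u i := by
  have hlen := hL.length_mul_add_length hI hu
  have hlen' := hL.length_mul_add_length hI (mul_mem (Subgroup.subset_closure hi) hu)
  rw [IsLeftDescent, IsLeftDescent, ← mul_assoc]
  rcases cs.length_simple_mul u i with hup | hdown <;> omega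

end IsLongestIn

theorem fixedPoints_parabolic_eq_pair_general {B W : Type*} [Group W] {M : CoxeterMatrix B}
    (cs : CoxeterSystem M W) (Γ : Subgroup (MulAut W))
    (hΓ : ∀ γ ∈ Γ, ⇑γ '' Set.range cs.simple = Set.range cs.simple)
    (wI : Set W → W)
    (hwI : ∀ I : Set W, IsFinParabolicOrbit cs Γ I → IsLongestIn cs I (wI I))
    (I : Set W) (hI : IsFinParabolicOrbit cs Γ I) :
    {w : W | w ∈ Subgroup.closure I ∧ ∀ γ ∈ Γ, γ w = w} = {1, wI I} := by
  have hL := hwI I hI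
  obtain ⟨⟨_, ⟨i₀, rfl⟩, rfl⟩, -⟩ := hI
  have hIS := cs.setOf_apply_simple_subset_range hΓ i₀
  have hfixL : ∀ γ ∈ Γ, γ (wI _) = wI _ := fun γ hγ ↦
    hL.eq_of_length_le hIS (apply_mem_closure_orbit hγ hL.1)
      (cs.length_map_eq γ (hΓ γ hγ) _).ge
  ext w
  refine ⟨fun ⟨hw, hfix⟩ ↦ ?_, ?_⟩
  · by_contra hne
    rw [Set.mem_insert_iff, Set.mem_singleton_iff, not_or] at hne
    have hwL : w * wI _ ≠ 1 := fun h ↦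
      hne.2 (eq_inv_of_mul_eq_one_left h ▸ inv_eq_of_mul_eq_one_right (hL.mul_self hIS))
    have hdesc := cs.isLeftDescent_of_mem_closure_orbit hΓ (mul_mem hw hL.1)
      (fun γ hγ ↦ by rw [map_mul, hfix γ hγ, hfixL γ hγ]) hwL
    exact (hL.isLeftDescent_mul_iff hIS hw ⟨1, one_mem Γ, rfl⟩).mp hdesc
      (cs.isLeftDescent_of_mem_closure_orbit hΓ hw hfix hne.1)
  · rintro (rfl | rfl)
    · exact ⟨one_mem _, fun γ _ ↦ map_one γ⟩
    · exact ⟨hL.1, hfixL⟩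

/-- for `I ∈ S̄`, the `Γ`-fixed points of `W_I` are exactly `{1, w_I}`. -/
theorem fixedPoints_parabolic_eq_pair {B W : Type*} [Finite B] [Group W] {M : CoxeterMatrix B}
    (cs : CoxeterSystem M W) (Γ : Subgroup (MulAut W))
    (hΓ : ∀ γ ∈ Γ, ⇑γ '' Set.range cs.simple = Set.range cs.simple)
    (wI : Set W → W)
    (hwI : ∀ I : Set W, IsFinParabolicOrbit cs Γ I → IsLongestIn cs I (wI I))
    (I : Set W) (hI : IsFinParabolicOrbit cs Γ I) :
    {w : W | w ∈ Subgroup.closure I ∧ ∀ γ ∈ Γ, γ w = w} = {1, wI I} :=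
  fixedPoints_parabolic_eq_pair_general cs Γ hΓ wI hwI I hI
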